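/- Let k be an arbitrary field, let A be a finitely generated k-algebra, let X = Spec(A), let φ: X → X be a morphism of affine k-schemes (given on points by φ(𝔭) = Φ⁻¹(𝔭) for a k-algebra homomorphism Φ: A → A), let α ∈ X be a point (a prime ideal of A, not necessarily closed), and let V = V(𝔞) be a Zariski-closed subset of X. Then {n ∈ ℕ : φⁿ(α) ∈ V} = A′ ∪ B, where A′ is a (possibly empty) finite union of infinite arithmetic progressions and B is a set of Banach density zero. -/

import Mathlib

/-- A set `S ⊆ ℕ` has Banach density zero: for every `ε > 0` there exists `N` such that
`|S ∩ I| ≤ ε·|I|` for every interval `I ⊆ ℕ` of length at least `N`. -/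
def BanachDensityZero (S : Set ℕ) : Prop :=
  ∀ ε : ℝ, 0 < ε → ∃ N : ℕ, ∀ a n : ℕ, N ≤ n →
    (Nat.card ↥(S ∩ Set.Ico a (a + n)) : ℝ) ≤ ε * n

/-!
Everything happens in a Noetherian space `X` with a continuous self-map `f`. The ω-limit set `Y`
of the orbit of `x` is the closure of a tail of the orbit, so `closure (f '' Y) = Y`, and
`t ↦ closure (f '' t)` permutes the finitely many irreducible components of `Y`; hence some
iterate `f^[p]` maps each component into itself. The times at which the orbit lies in a component
contained in `V` are then closed under `n ↦ n + p`, so they form finitely many progressions.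
The rest of `V ∩ Y` is a closed set `W` containing no component of `Y`. If the orbit visited `W`
with positive upper Banach density, a pigeonhole argument would give `d ≥ 1` such that it also
visits `W ∩ f^[d] ⁻¹' W` with positive density; descending through closed sets, one reaches a
closed `T ⊆ W` met by the orbit with `f^[d] '' T ⊆ T`, and such a `T` contains a component
of `Y`.
-/

open Set Function Filter TopologicalSpace
open scoped omegaLimit

theorem ncard_inter_Ico_le_of_subset {S T : Set ℕ} (hST : S ⊆ T) (a n : ℕ) :
    (S ∩ Ico a (a + n)).ncard ≤ (T ∩ Ico a (a + n)).ncard :=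
  ncard_le_ncard (inter_subset_inter_left _ hST) ((finite_Ico _ _).inter_of_right _)

theorem ncard_union_inter_Ico_le (S T : Set ℕ) (a n : ℕ) :
    ((S ∪ T) ∩ Ico a (a + n)).ncard ≤
      (S ∩ Ico a (a + n)).ncard + (T ∩ Ico a (a + n)).ncard :=
  union_inter_distrib_right S T _ ▸ ncard_union_le _ _

theorem Set.Finite.banachDensityZero {S : Set ℕ} (hS : S.Finite) : BanachDensityZero S := by
  intro ε hε
  obtain ⟨N, hN⟩ := exists_nat_ge (S.ncard / ε)
  refine ⟨N, fun a n hn => ?_⟩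
  rw [Nat.card_coe_set_eq]
  calc ((S ∩ Ico a (a + n)).ncard : ℝ) ≤ S.ncard := by
        exact_mod_cast ncard_le_ncard inter_subset_left hS
    _ ≤ ε * n := by
        rw [← div_le_iff₀' hε]
        exact hN.trans (by exact_mod_cast hn)

namespace BanachDensityZero

theorem union {S T : Set ℕ} (hS : BanachDensityZero S) (hT : BanachDensityZero T) :
    BanachDensityZero (S ∪ T) := by
  intro ε hε
  obtain ⟨N₁, hN₁⟩ := hS (ε / 2) (half_pos hε)
  obtain ⟨N₂, hN₂⟩ := hT (ε / 2) (half_pos hε)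
  refine ⟨max N₁ N₂, fun a n hn => ?_⟩
  have hS' := hN₁ a n (le_of_max_le_left hn)
  have hT' := hN₂ a n (le_of_max_le_right hn)
  simp only [Nat.card_coe_set_eq] at hS' hT' ⊢
  have : (((S ∪ T) ∩ Ico a (a + n)).ncard : ℝ) ≤
      (S ∩ Ico a (a + n)).ncard + (T ∩ Ico a (a + n)).ncard := by
    exact_mod_cast ncard_union_inter_Ico_le S T a n
  linarith

theorem biUnion_finset {ι : Type*} (s : Finset ι) {S : ι → Set ℕ}
    (hS : ∀ i ∈ s, BanachDensityZero (S i)) : BanachDensityZero (⋃ i ∈ s, S i) := by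
  classical
  induction s using Finset.induction_on with
  | empty => simpa using finite_empty.banachDensityZero
  | insert i s _ ih =>
    rw [Finset.set_biUnion_insert]
    exact (hS i (s.mem_insert_self i)).union (ih fun j hj => hS j (Finset.mem_insert_of_mem hj))

end BanachDensityZero

theorem ncard_inter_Ico_le_of_separated {G : Set ℕ} {D : ℕ} (hD : 0 < D)
    (hG : ∀ m ∈ G, ∀ m' ∈ G, m < m' → m + D ≤ m') (a n : ℕ) :
    (G ∩ Ico a (a + n)).ncard ≤ n / D + 1 := by
  have hblock : ∀ m ∈ G ∩ Ico a (a + n), (m - a) / D ∈ Iio (n / D + 1) := fun m hm =>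
    Nat.lt_succ_of_le (Nat.div_le_div_right (by grind))
  have hinj : InjOn (fun m => (m - a) / D) (G ∩ Ico a (a + n)) := by
    intro m hm m' hm' hq
    have := Nat.div_add_mod (m - a) D
    have := Nat.div_add_mod (m' - a) D
    have := Nat.mod_lt (m - a) hD
    have := Nat.mod_lt (m' - a) hD
    simp only at hq
    rcases lt_trichotomy m m' with h | h | h
    · have := hG m hm.1 m' hm'.1 h
      grind
    · exact h
    · have := hG m' hm'.1 m hm.1 h
      grind
  simpa using ncard_le_ncard_of_injOn _ hblock hinj (finite_Iio _)

theorem BanachDensityZero.of_forall_inter_shift {S : Set ℕ}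
    (hS : ∀ d, 0 < d → BanachDensityZero {m | m ∈ S ∧ m + d ∈ S}) :
    BanachDensityZero S := by
  intro ε hε
  set D := ⌈3 / ε⌉₊
  have hD : 0 < D := Nat.ceil_pos.2 (by positivity)
  have hDε : 3 / ε ≤ D := Nat.le_ceil _
  set R := ⋃ d ∈ Finset.Icc 1 D, {m | m ∈ S ∧ m + d ∈ S}
  have hR : BanachDensityZero R :=
    .biUnion_finset _ fun d hd => hS d (Finset.mem_Icc.1 hd).1
  have hsep : ∀ m ∈ S \ R, ∀ m' ∈ S \ R, m < m' → m + D ≤ m' := by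
    intro m hm m' hm' hlt
    by_contra! h
    refine hm.2 (mem_biUnion (x := m' - m) (Finset.mem_Icc.2 ⟨by omega, by omega⟩) ?_)
    exact ⟨hm.1, by rw [Nat.add_sub_cancel' hlt.le]; exact hm'.1⟩
  obtain ⟨N, hN⟩ := hR (ε / 3) (by positivity)
  refine ⟨max N D, fun a n hn => ?_⟩
  have hRn := hN a n (le_of_max_le_left hn)
  have hn' : 3 / ε ≤ n := hDε.trans (by exact_mod_cast le_of_max_le_right hn)
  rw [Nat.card_coe_set_eq] at hRn ⊢
  have hsplit : ((S ∩ Ico a (a + n)).ncard : ℝ) ≤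
      ((S \ R) ∩ Ico a (a + n)).ncard + (R ∩ Ico a (a + n)).ncard := by
    exact_mod_cast (ncard_inter_Ico_le_of_subset (subset_sdiff_union S R) a n).trans
      (ncard_union_inter_Ico_le _ _ a n)
  have hsepn : (((S \ R) ∩ Ico a (a + n)).ncard : ℝ) ≤ n / D + 1 :=
    (Nat.cast_le.2 (ncard_inter_Ico_le_of_separated hD hsep a n)).trans (by
      push_cast
      exact add_le_add_left Nat.cast_div_le 1)
  have hnD : (n : ℝ) / D ≤ ε / 3 * n := by
    rw [div_le_iff₀ (by positivity)]
    have := (div_le_iff₀ hε).1 hDε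
    nlinarith
  have hone : (1 : ℝ) ≤ ε / 3 * n := by
    have := (div_le_iff₀ hε).1 hn'
    linarith
  linarith

theorem exists_finset_arithProg_of_add_mem {S : Set ℕ} {p : ℕ} (hp : 0 < p)
    (hS : ∀ n ∈ S, n + p ∈ S) :
    ∃ F : Finset (ℕ × ℕ), (∀ q ∈ F, 1 ≤ q.1) ∧
      S = ⋃ q ∈ F, {n : ℕ | ∃ ℓ : ℕ, n = q.1 * ℓ + q.2} := by
  have hS' : ∀ m ∈ S, ∀ ℓ, p * ℓ + m ∈ S := by
    intro m hm ℓ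
    induction ℓ with
    | zero => simpa using hm
    | succ ℓ ih => simpa [mul_add, add_right_comm] using hS _ ih
  -- the least element of each residue class of `S` modulo `p`
  set M := {m ∈ S | m < p ∨ m - p ∉ S}
  have hM : M.Finite := by
    refine Finite.of_finite_image ((finite_Iio p).subset ?_) (f := (· % p)) ?_
    · rintro _ ⟨m, -, rfl⟩
      exact Nat.mod_lt m hp
    · intro m hm m' hm' hmod
      wlog hlt : m < m' generalizing m m'
      · rcases (not_lt.1 hlt).lt_or_eq with h | h
        exacts [(this hm' hm hmod.symm h).symm, h.symm]
      obtain ⟨_ | k, hk⟩ := (Nat.modEq_iff_dvd' hlt.le).1 hmod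
      · omega
      rw [Nat.mul_succ] at hk
      have hpm : p ≤ m' := by omega
      have : m' - p = p * k + m := by omega
      exact absurd (this ▸ hS' m hm.1 k) (hm'.2.resolve_left (not_lt.2 hpm))
  refine ⟨hM.toFinset.image (p, ·), ?_, ?_⟩
  · simp only [Finset.mem_image]
    rintro _ ⟨m, -, rfl⟩
    exact hp
  ext n
  simp only [Finset.mem_image, Finite.mem_toFinset, mem_iUnion, mem_ofPred_eq, exists_prop]
  constructor
  · intro hn
    induction n using Nat.strong_induction_on with
    | _ n ih =>
      by_cases hnM : n ∈ M
      · exact ⟨(p, n), ⟨n, hnM, rfl⟩, 0, by simp⟩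
      · have hpn : p ≤ n ∧ n - p ∈ S := by simp [M, hn] at hnM; omega
        obtain ⟨q, ⟨m, hm, rfl⟩, ℓ, hℓ⟩ := ih (n - p) (by omega) hpn.2
        refine ⟨(p, m), ⟨m, hm, rfl⟩, ℓ + 1, ?_⟩
        simp only at hℓ ⊢
        rw [Nat.mul_succ]
        omega
  · rintro ⟨_, ⟨m, hm, rfl⟩, ℓ, rfl⟩
    exact hS' m hm.1 ℓ

theorem Set.BijOn.exists_pos_iterate_eq {α : Type*} {g : α → α} {s : Set α} (hs : s.Finite)
    (h : BijOn g s s) : ∃ p, 0 < p ∧ ∀ t ∈ s, g^[p] t = t := by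
  have := hs.to_subtype
  refine ⟨orderOf (h.equiv g), orderOf_pos _, fun t ht => ?_⟩
  have := congr_arg Subtype.val (Equiv.Perm.ext_iff.1 (pow_orderOf_eq_one (h.equiv g)) ⟨t, ht⟩)
  rwa [Equiv.Perm.coe_pow, show ⇑(h.equiv g) = h.mapsTo.restrict g s s from rfl,
    MapsTo.iterate_restrict] at this

section Topology

variable {X : Type*} [TopologicalSpace X]

theorem Set.Finite.isClosed_sUnion {T : Set (Set X)} (hT : T.Finite)
    (hcl : ∀ t ∈ T, IsClosed t) : IsClosed (⋃₀ T) :=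
  sUnion_eq_biUnion ▸ hT.isClosed_biUnion hcl

theorem IsIrreducible.exists_subset_of_subset_sUnion {s : Set X} (hs : IsIrreducible s)
    {T : Set (Set X)} (hT : T.Finite) (hcl : ∀ t ∈ T, IsClosed t) (hsT : s ⊆ ⋃₀ T) :
    ∃ t ∈ T, s ⊆ t := by
  lift T to Finset (Set X) using hT
  exact isIrreducible_iff_sUnion_isClosed.1 hs T hcl hsT

def irreducibleComponentsIn (Y : Set X) : Set (Set X) :=
  {t | Maximal (fun s => IsIrreducible s ∧ s ⊆ Y) t}

section Components

variable {Y : Set X}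

theorem isClosed_of_mem_irreducibleComponentsIn (hY : IsClosed Y) {t : Set X}
    (ht : t ∈ irreducibleComponentsIn Y) : IsClosed t :=
  closure_subset_iff_isClosed.1 <|
    ht.2 ⟨ht.1.1.closure, closure_minimal ht.1.2 hY⟩ subset_closure

variable [NoetherianSpace X]

theorem exists_mem_irreducibleComponentsIn_superset (hY : IsClosed Y) {s : Set X}
    (hs : IsIrreducible s) (hsY : s ⊆ Y) : ∃ t ∈ irreducibleComponentsIn Y, s ⊆ t := by
  obtain ⟨S, hSf, hSc, hSi, rfl⟩ := NoetherianSpace.exists_finite_set_isClosed_irreducible hY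
  obtain ⟨u, huS, hsu⟩ := hs.exists_subset_of_subset_sUnion hSf hSc hsY
  obtain ⟨t, hut, htmax⟩ := (hSf.inter_of_left {u | s ⊆ u}).exists_le_maximal ⟨huS, hsu⟩
  refine ⟨t, ⟨⟨hSi t htmax.1.1, subset_sUnion_of_mem htmax.1.1⟩, fun v hv htv => ?_⟩,
    hsu.trans hut⟩
  obtain ⟨w, hwS, hvw⟩ := hv.1.exists_subset_of_subset_sUnion hSf hSc hv.2
  exact hvw.trans (htmax.2 ⟨hwS, hsu.trans (hut.trans (htv.trans hvw))⟩ (htv.trans hvw))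

theorem finite_irreducibleComponentsIn (hY : IsClosed Y) :
    (irreducibleComponentsIn Y).Finite := by
  obtain ⟨S, hSf, hSc, hSi, rfl⟩ := NoetherianSpace.exists_finite_set_isClosed_irreducible hY
  refine hSf.subset fun t ht => ?_
  obtain ⟨u, huS, htu⟩ := ht.1.1.exists_subset_of_subset_sUnion hSf hSc ht.1.2
  rwa [htu.antisymm (ht.2 ⟨hSi u huS, subset_sUnion_of_mem huS⟩ htu)]

theorem sUnion_irreducibleComponentsIn (hY : IsClosed Y) :
    ⋃₀ irreducibleComponentsIn Y = Y := by
  refine subset_antisymm (sUnion_subset fun t ht => ht.1.2) fun y hy => ?_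
  obtain ⟨t, ht, hyt⟩ := exists_mem_irreducibleComponentsIn_superset hY isIrreducible_singleton
    (singleton_subset_iff.2 hy)
  exact ⟨t, ht, hyt rfl⟩

theorem bijOn_closure_image_irreducibleComponentsIn {f : X → X} (hf : Continuous f)
    (hY : IsClosed Y) (hfY : closure (f '' Y) = Y) :
    BijOn (fun t => closure (f '' t)) (irreducibleComponentsIn Y)
      (irreducibleComponentsIn Y) := by
  set C := irreducibleComponentsIn Y
  have hC := finite_irreducibleComponentsIn hY
  have hsurj : SurjOn (fun t => closure (f '' t)) C C := by
    intro u hu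
    have hcover : u ⊆ ⋃₀ ((fun t => closure (f '' t)) '' C) := calc
      u ⊆ closure (f '' ⋃₀ C) := by rw [sUnion_irreducibleComponentsIn hY, hfY]; exact hu.1.2
      _ ⊆ _ := by
        refine closure_minimal ?_ ((hC.image _).isClosed_sUnion ?_)
        · rintro _ ⟨y, ⟨t, ht, hyt⟩, rfl⟩
          exact ⟨_, mem_image_of_mem _ ht, subset_closure (mem_image_of_mem f hyt)⟩
        · rintro _ ⟨t, -, rfl⟩
          exact isClosed_closure
    obtain ⟨_, ⟨t, ht, rfl⟩, hut⟩ := hu.1.1.exists_subset_of_subset_sUnion (hC.image _)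
      (by rintro _ ⟨t, -, rfl⟩; exact isClosed_closure) hcover
    have htY : closure (f '' t) ⊆ Y := hfY ▸ closure_mono (image_mono ht.1.2)
    exact ⟨t, ht, (hu.2 ⟨(ht.1.1.image f hf.continuousOn).closure, htY⟩ hut).antisymm hut⟩
  have himage : (fun t => closure (f '' t)) '' C = C :=
    (eq_of_subset_of_ncard_le hsurj (ncard_image_le hC) (hC.image _)).symm
  exact (hC.surjOn_iff_bijOn_of_mapsTo fun t ht => himage.subset (mem_image_of_mem _ ht)).1 hsurj

theorem not_subset_inter_sUnion_of_mem_irreducibleComponentsIn (hY : IsClosed Y) {t : Set X}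
    (ht : t ∈ irreducibleComponentsIn Y) (V : Set X) :
    ¬ t ⊆ V ∩ ⋃₀ {u ∈ irreducibleComponentsIn Y | ¬ u ⊆ V} := by
  intro htV
  obtain ⟨u, ⟨hu, huV⟩, htu⟩ := ht.1.1.exists_subset_of_subset_sUnion
    ((finite_irreducibleComponentsIn hY).subset fun _ h => h.1)
    (fun u hu => isClosed_of_mem_irreducibleComponentsIn hY hu.1) (htV.trans inter_subset_right)
  exact huV ((ht.2 hu.1 htu).trans (htV.trans inter_subset_left))

end Components

section Orbit

variable {f : X → X} {x : X}

theorem omegaLimit_iterate_subset_closure (m : ℕ) :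
    ω atTop (fun n y => f^[n] y) {x} ⊆ closure ((f^[·] x) '' Ici m) := by
  simpa [image2_singleton_right] using
    omegaLimit_subset_closure_image2 atTop (fun n y => f^[n] y) {x} (Ici_mem_atTop m)

theorem exists_omegaLimit_iterate_eq_closure [NoetherianSpace X] :
    ∃ N, ∀ m ≥ N, ω atTop (fun n y => f^[n] y) {x} = closure ((f^[·] x) '' Ici m) := by
  obtain ⟨N, hN⟩ := WellFoundedLT.antitone_chain_condition
    (f := fun m => (⟨closure ((f^[·] x) '' Ici m), isClosed_closure⟩ : Closeds X))
    fun m m' h => closure_mono (image_mono (Ici_subset_Ici.2 h))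
  have hN' : ∀ m ≥ N, closure ((f^[·] x) '' Ici m) = closure ((f^[·] x) '' Ici N) :=
    fun m hm => congr_arg SetLike.coe (hN m hm).symm
  refine ⟨N, fun m hm => (omegaLimit_iterate_subset_closure m).antisymm ?_⟩
  rw [omegaLimit_def]
  refine subset_iInter₂ fun u hu => ?_
  obtain ⟨k, hk⟩ := mem_atTop_sets.1 hu
  rw [hN' m hm, ← hN' (max m k) (le_max_of_le_left hm)]
  refine closure_mono ?_
  rintro _ ⟨n, hn, rfl⟩
  exact mem_image2_of_mem (hk n (le_of_max_le_right hn)) rfl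

theorem closure_image_omegaLimit_iterate [NoetherianSpace X] (hf : Continuous f) :
    closure (f '' ω atTop (fun n y => f^[n] y) {x}) =
      ω atTop (fun n y => f^[n] y) {x} := by
  obtain ⟨N, hN⟩ := exists_omegaLimit_iterate_eq_closure (f := f) (x := x)
  calc closure (f '' ω atTop (fun n y => f^[n] y) {x})
      = closure (f '' ((f^[·] x) '' Ici N)) := by rw [hN N le_rfl, closure_image_closure hf]
    _ = closure ((f^[·] x) '' Ici (N + 1)) := by
      rw [← image_add_const_Ici, image_image, image_image]
      simp only [iterate_succ_apply']
    _ = ω atTop (fun n y => f^[n] y) {x} := (hN _ (by omega)).symm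

theorem exists_isClosed_mapsTo_iterate_subset_of_not_banachDensityZero [NoetherianSpace X]
    (hf : Continuous f) {W : Set X} (hW : IsClosed W)
    (hdens : ¬ BanachDensityZero {n | f^[n] x ∈ W}) :
    ∃ T ⊆ W, IsClosed T ∧ ∃ d, 0 < d ∧ MapsTo f^[d] T T ∧ ∃ c, f^[c] x ∈ T := by
  lift W to Closeds X using hW
  induction W using WellFoundedLT.induction with
  | _ W ih =>
  obtain ⟨d, hd, hdens'⟩ : ∃ d, 0 < d ∧
      ¬ BanachDensityZero {m | m ∈ {n | f^[n] x ∈ W} ∧ m + d ∈ {n | f^[n] x ∈ W}} := by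
    by_contra! h
    exact hdens (.of_forall_inter_shift h)
  let W' : Closeds X :=
    ⟨W ∩ f^[d] ⁻¹' W, W.isClosed.inter (W.isClosed.preimage (hf.iterate d))⟩
  have hvisits : {m | m ∈ {n | f^[n] x ∈ W} ∧ m + d ∈ {n | f^[n] x ∈ W}} =
      {n | f^[n] x ∈ (W' : Set X)} := by
    ext n
    simp [W', ← iterate_add_apply, add_comm d n]
  rcases (show W' ≤ W from fun _ hy => hy.1).lt_or_eq with hlt | heq
  · obtain ⟨T, hTW', hT⟩ := ih W' hlt (hvisits ▸ hdens')
    exact ⟨T, hTW'.trans inter_subset_left, hT⟩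
  · obtain ⟨c, hc⟩ : {n | f^[n] x ∈ (W : Set X)}.Nonempty := by
      by_contra! h
      exact hdens (h ▸ finite_empty.banachDensityZero)
    have hWd : MapsTo f^[d] W W := fun y hy => (heq.symm ▸ hy : y ∈ (W' : Set X)).2
    exact ⟨W, subset_rfl, W.isClosed, d, hd, hWd, c, hc⟩

theorem iterate_closure_image (hf : Continuous f) {t : Set X} (ht : IsClosed t) (j : ℕ) :
    (fun s => closure (f '' s))^[j] t = closure (f^[j] '' t) := by
  induction j with
  | zero => rw [iterate_zero_apply, iterate_zero, image_id, ht.closure_eq]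
  | succ j ih => rw [iterate_succ_apply', ih, closure_image_closure hf, iterate_succ', image_comp]

theorem exists_pos_mapsTo_iterate_irreducibleComponentsIn_omegaLimit [NoetherianSpace X]
    (hf : Continuous f) : ∃ p, 0 < p ∧
      ∀ t ∈ irreducibleComponentsIn (ω atTop (fun n y => f^[n] y) {x}),
        MapsTo f^[p] t t := by
  have hY := isClosed_omegaLimit atTop (fun n y => f^[n] y) {x}
  obtain ⟨p, hp, hper⟩ := (bijOn_closure_image_irreducibleComponentsIn hf hY
    (closure_image_omegaLimit_iterate hf)).exists_pos_iterate_eq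
      (finite_irreducibleComponentsIn hY)
  refine ⟨p, hp, fun t ht => (mapsTo_image _ t).mono_right ?_⟩
  calc f^[p] '' t ⊆ closure (f^[p] '' t) := subset_closure
    _ = t := by
      rw [← iterate_closure_image hf (isClosed_of_mem_irreducibleComponentsIn hY ht), hper t ht]

theorem exists_mem_irreducibleComponentsIn_omegaLimit_subset [NoetherianSpace X]
    (hf : Continuous f) {T : Set X} (hT : IsClosed T) {c d : ℕ} (hd : 0 < d)
    (hTd : MapsTo f^[d] T T) (hc : f^[c] x ∈ T) :
    ∃ t ∈ irreducibleComponentsIn (ω atTop (fun n y => f^[n] y) {x}), t ⊆ T := by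
  have hYne := nonempty_omegaLimit atTop (fun n y => f^[n] y) {x} (singleton_nonempty x)
  set Y := ω atTop (fun n y => f^[n] y) {x}
  have hY : IsClosed Y := isClosed_omegaLimit _ _ _
  have hcover : Y ⊆ ⋃₀ ((fun i => closure (f^[i] '' T)) '' Iio d) := by
    refine (omegaLimit_iterate_subset_closure c).trans <| closure_minimal ?_ <|
      ((finite_Iio d).image _).isClosed_sUnion (by rintro _ ⟨i, -, rfl⟩; exact isClosed_closure)
    rintro _ ⟨n, hn, rfl⟩
    obtain ⟨q, i, hi, rfl⟩ : ∃ q i, i < d ∧ n = i + d * q + c := by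
      refine ⟨(n - c) / d, (n - c) % d, Nat.mod_lt _ hd, ?_⟩
      have := Nat.mod_add_div (n - c) d
      have : c ≤ n := hn
      omega
    refine ⟨_, mem_image_of_mem _ hi, subset_closure ⟨f^[d * q] (f^[c] x), ?_, ?_⟩⟩
    · rw [iterate_mul]
      exact hTd.iterate q hc
    · simp only [iterate_add_apply]
  rw [← sUnion_irreducibleComponentsIn hY] at hYne
  obtain ⟨t₀, ht₀, -⟩ := nonempty_sUnion.1 hYne
  obtain ⟨_, ⟨i, hi, rfl⟩, ht₀i⟩ := ht₀.1.1.exists_subset_of_subset_sUnion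
    ((finite_Iio d).image _) (by rintro _ ⟨i, -, rfl⟩; exact isClosed_closure)
    (ht₀.1.2.trans hcover)
  have hbij :=
    bijOn_closure_image_irreducibleComponentsIn hf hY (closure_image_omegaLimit_iterate hf)
  refine ⟨_, hbij.mapsTo.iterate (d - i) ht₀, ?_⟩
  rw [iterate_closure_image hf (isClosed_of_mem_irreducibleComponentsIn hY ht₀)]
  calc closure (f^[d - i] '' t₀) ⊆ closure (f^[d - i] '' closure (f^[i] '' T)) :=
        closure_mono (image_mono ht₀i)
    _ = closure (f^[d] '' T) := by
        rw [closure_image_closure (hf.iterate _), ← image_comp, ← iterate_add,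
          Nat.sub_add_cancel (le_of_lt hi)]
    _ ⊆ T := closure_minimal hTd.image_subset hT

end Orbit

theorem setOf_iterate_mem_eq_union_arithProg_banachDensityZero [NoetherianSpace X] {f : X → X}
    (hf : Continuous f) (x : X) {V : Set X} (hV : IsClosed V) :
    ∃ (F : Finset (ℕ × ℕ)) (B : Set ℕ), (∀ p ∈ F, 1 ≤ p.1) ∧
      BanachDensityZero B ∧
      {n | f^[n] x ∈ V} = (⋃ p ∈ F, {n | ∃ ℓ, n = p.1 * ℓ + p.2}) ∪ B := by
  obtain ⟨N, hN⟩ := exists_omegaLimit_iterate_eq_closure (f := f) (x := x)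
  set Y := ω atTop (fun n y => f^[n] y) {x}
  have hY : IsClosed Y := isClosed_omegaLimit _ _ _
  set U := ⋃₀ {t ∈ irreducibleComponentsIn Y | t ⊆ V}
  set W := V ∩ ⋃₀ {t ∈ irreducibleComponentsIn Y | ¬ t ⊆ V}
  obtain ⟨p, hp, hper⟩ :=
    exists_pos_mapsTo_iterate_irreducibleComponentsIn_omegaLimit (x := x) hf
  obtain ⟨F, hF, hUF⟩ := exists_finset_arithProg_of_add_mem hp (S := {n | f^[n] x ∈ U}) (by
    rintro n ⟨t, ht, hnt⟩
    exact ⟨t, ht, by rw [add_comm, iterate_add_apply]; exact hper t ht.1 hnt⟩)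
  have hW : BanachDensityZero {n | f^[n] x ∈ W} := by
    by_contra hdens
    have hWcl : IsClosed W := hV.inter <|
      ((finite_irreducibleComponentsIn hY).subset fun _ h => h.1).isClosed_sUnion
        fun t ht => isClosed_of_mem_irreducibleComponentsIn hY ht.1
    obtain ⟨T, hTW, hT, d, hd, hTd, c, hc⟩ :=
      exists_isClosed_mapsTo_iterate_subset_of_not_banachDensityZero hf hWcl hdens
    obtain ⟨t, ht, htT⟩ := exists_mem_irreducibleComponentsIn_omegaLimit_subset hf hT hd hTd hc
    exact not_subset_inter_sUnion_of_mem_irreducibleComponentsIn hY ht V (htT.trans hTW)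
  refine ⟨F, {n | f^[n] x ∈ W} ∪ ({n | f^[n] x ∈ V} ∩ Iio N), hF,
    hW.union ((finite_Iio N).subset inter_subset_right).banachDensityZero, ?_⟩
  rw [← hUF]
  ext n
  simp only [mem_ofPred_eq, mem_union, mem_inter_iff, mem_Iio]
  constructor
  · intro hnV
    by_cases hnN : n < N
    · exact Or.inr (Or.inr ⟨hnV, hnN⟩)
    have hnY : f^[n] x ∈ Y :=
      hN n (not_lt.1 hnN) ▸ subset_closure (mem_image_of_mem _ self_mem_Ici)
    rw [← sUnion_irreducibleComponentsIn hY] at hnY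
    obtain ⟨t, ht, hnt⟩ := hnY
    by_cases htV : t ⊆ V
    exacts [Or.inl ⟨t, ⟨ht, htV⟩, hnt⟩, Or.inr (Or.inl ⟨hnV, t, ⟨ht, htV⟩, hnt⟩)]
  · rintro (⟨t, ⟨-, htV⟩, hnt⟩ | ⟨hnV, -⟩ | ⟨hnV, -⟩)
    exacts [htV hnt, hnV, hnV]

end Topology

theorem orbit_meets_closed_set_in_AP_union_density_zero
    (k A : Type*) [Field k] [CommRing A] [Algebra k A] [Algebra.FiniteType k A]
    (Φ : A →ₐ[k] A) (α : PrimeSpectrum A) (𝔞 : Ideal A)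
    (S : Set ℕ)
    (hS : S = {n : ℕ | (PrimeSpectrum.comap Φ.toRingHom)^[n] α ∈
      PrimeSpectrum.zeroLocus (𝔞 : Set A)}) :
    ∃ (F : Finset (ℕ × ℕ)) (B : Set ℕ),
      (∀ p ∈ F, 1 ≤ p.1) ∧
      BanachDensityZero B ∧
      S = (⋃ p ∈ F, {n : ℕ | ∃ ℓ : ℕ, n = p.1 * ℓ + p.2}) ∪ B := by
  have : IsNoetherianRing A := Algebra.FiniteType.isNoetherianRing k A
  exact hS ▸ setOf_iterate_mem_eq_union_arithProg_banachDensityZero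
    (PrimeSpectrum.continuous_comap Φ.toRingHom) α (PrimeSpectrum.isClosed_zeroLocus _)
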